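/- arXiv:2008.02252 — 4 statements merged into one kernel-verified Lean document; each statement's English description precedes it below -/
import Mathlib

section
/- Let X, Y be real d × d symmetric matrices with Tr(X²) = Tr(Y²) = 1. Then Tr([X,Y]ᵀ [X,Y]) ≤ 2, where [X,Y] = XY − YX denotes the matrix commutator. Consequently, 2 Tr(X²Y²) − 2 Tr((XY)²) ≤ 2. -/
/-!
Conjugating by an orthogonal matrix that diagonalises `X = diag(a)` preserves the Frobenius
norm, and turns `[X, Y]` into the matrix with entries `(aᵢ - aⱼ) zᵢⱼ`. Since
`(aᵢ - aⱼ)² ≤ 2 (aᵢ² + aⱼ²) ≤ 2 ‖a‖²` off the diagonal,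
`‖[X, Y]‖² ≤ 2 ‖X‖² ‖Y‖²`.
-/

open Matrix Unitary

section

variable {n : Type*} [Fintype n]

theorem sq_sub_le_two_mul_sum_sq [DecidableEq n] (a : n → ℝ) (i j : n) :
    (a i - a j) ^ 2 ≤ 2 * ∑ k, a k ^ 2 := by
  rcases eq_or_ne i j with rfl | hij
  · rw [sub_self, zero_pow two_ne_zero]; positivity
  · have hpair : a i ^ 2 + a j ^ 2 ≤ ∑ k, a k ^ 2 := by
      rw [← Finset.sum_pair (f := fun k => a k ^ 2) hij]
      exact Finset.sum_le_sum_of_subset_of_nonneg (Finset.subset_univ _)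
        fun k _ _ => sq_nonneg _
    nlinarith [sq_nonneg (a i + a j)]

theorem sum_sq_sub_mul_sq_le (a : n → ℝ) (z : n → n → ℝ) :
    ∑ i, ∑ j, ((a i - a j) * z i j) ^ 2 ≤ 2 * (∑ k, a k ^ 2) * ∑ i, ∑ j, z i j ^ 2 := by
  classical
  rw [Finset.mul_sum]
  gcongr with i _
  rw [Finset.mul_sum]
  gcongr with j _
  rw [mul_pow]
  exact mul_le_mul_of_nonneg_right (sq_sub_le_two_mul_sum_sq a i j) (sq_nonneg _)

theorem trace_transpose_mul_self {m : Type*} [Fintype m] {R : Type*} [CommSemiring R]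
    (A : Matrix m n R) : (Aᵀ * A).trace = ∑ i, ∑ j, A i j ^ 2 := by
  simp only [trace, Matrix.diag, mul_apply, transpose_apply, sq]
  exact Finset.sum_comm

theorem diagonal_mul_sub_mul_diagonal_apply [DecidableEq n] {R : Type*} [CommRing R]
    (a : n → R) (Z : Matrix n n R) (i j : n) :
    (diagonal a * Z - Z * diagonal a) i j = (a i - a j) * Z i j := by
  rw [Matrix.sub_apply, diagonal_mul, mul_diagonal, sub_mul, mul_comm (Z i j)]

theorem trace_transpose_mul_self_conjStarAlgAut [DecidableEq n] (u : unitary (Matrix n n ℝ))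
    (M : Matrix n n ℝ) :
    ((conjStarAlgAut ℝ _ u M)ᵀ * conjStarAlgAut ℝ _ u M).trace = (Mᵀ * M).trace := by
  have hstar : ∀ N : Matrix n n ℝ, Nᵀ = star N := fun N => by
    rw [star_eq_conjTranspose, conjTranspose_eq_transpose_of_trivial]
  rw [hstar, hstar, ← map_star, ← map_mul, conjStarAlgAut_apply, trace_mul_cycle,
    coe_star_mul_self, one_mul]

theorem trace_commutator_transpose_mul_self_le [DecidableEq n] {X : Matrix n n ℝ}
    (hX : X.IsHermitian) (Y : Matrix n n ℝ) :
    ((X * Y - Y * X)ᵀ * (X * Y - Y * X)).trace ≤ 2 * (Xᵀ * X).trace * (Yᵀ * Y).trace := by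
  set u := star hX.eigenvectorUnitary
  have hD : conjStarAlgAut ℝ _ u X = diagonal hX.eigenvalues :=
    hX.conjStarAlgAut_star_eigenvectorUnitary
  rw [← trace_transpose_mul_self_conjStarAlgAut u X,
    ← trace_transpose_mul_self_conjStarAlgAut u Y,
    ← trace_transpose_mul_self_conjStarAlgAut u, map_sub, map_mul, map_mul, hD]
  rw [diagonal_transpose, diagonal_mul_diagonal, trace_diagonal, trace_transpose_mul_self,
    trace_transpose_mul_self]
  simp only [diagonal_mul_sub_mul_diagonal_apply, ← sq]
  exact sum_sq_sub_mul_sq_le _ _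

theorem trace_commutator_transpose_mul_self {R : Type*} [CommRing R] {X Y : Matrix n n R}
    (hX : X.IsSymm) (hY : Y.IsSymm) :
    ((X * Y - Y * X)ᵀ * (X * Y - Y * X)).trace
      = 2 * (X * X * (Y * Y)).trace - 2 * (X * Y * (X * Y)).trace := by
  have hT : (X * Y - Y * X)ᵀ = Y * X - X * Y := by
    rw [transpose_sub, transpose_mul, transpose_mul, hX.eq, hY.eq]
  have h₁ : (X * Y * (Y * X)).trace = (X * X * (Y * Y)).trace := by
    rw [← Matrix.mul_assoc, trace_mul_comm]
    simp only [Matrix.mul_assoc]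
  have h₂ : (Y * X * (X * Y)).trace = (X * Y * (Y * X)).trace := trace_mul_comm _ _
  have h₃ : (Y * X * (Y * X)).trace = (X * Y * (X * Y)).trace := by
    rw [Matrix.mul_assoc, trace_mul_comm]
    simp only [Matrix.mul_assoc]
  rw [hT, sub_mul, mul_sub, mul_sub, trace_sub, trace_sub, trace_sub, h₂, h₁, h₃]
  ring

end

open Matrix in
theorem stmt1_general {d : ℕ} (X Y : Matrix (Fin d) (Fin d) ℝ)
    (hX : X.IsSymm) (hY : Y.IsSymm)
    (hX2 : (X * X).trace = 1) (hY2 : (Y * Y).trace = 1) :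
    ((X * Y - Y * X)ᵀ * (X * Y - Y * X)).trace ≤ 2 ∧
    2 * (X * X * (Y * Y)).trace - 2 * ((X * Y) * (X * Y)).trace ≤ 2 := by
  have hle := trace_commutator_transpose_mul_self_le (isHermitian_iff_isSymm.mpr hX) Y
  rw [hX.eq, hY.eq, hX2, hY2, mul_one, mul_one] at hle
  exact ⟨hle, trace_commutator_transpose_mul_self hX hY ▸ hle⟩

open Matrix in
/-- For symmetric `d × d` real matrices with `Tr(X²) = Tr(Y²) = 1`, the commutator
`[X,Y] = XY - YX` satisfies `Tr([X,Y]ᵀ[X,Y]) ≤ 2`, and consequently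
`2 Tr(X²Y²) - 2 Tr((XY)²) ≤ 2`. -/
theorem stmt1 {d : ℕ} (hd : 1 ≤ d) (X Y : Matrix (Fin d) (Fin d) ℝ)
    (hX : X.IsSymm) (hY : Y.IsSymm)
    (hX2 : (X * X).trace = 1) (hY2 : (Y * Y).trace = 1) :
    ((X * Y - Y * X)ᵀ * (X * Y - Y * X)).trace ≤ 2 ∧
    2 * (X * X * (Y * Y)).trace - 2 * ((X * Y) * (X * Y)).trace ≤ 2 :=
  stmt1_general X Y hX hY hX2 hY2
end

section
/- Let X be a real d × d diagonal matrix with Tr(X²) = 1 and let Y be a real d × d symmetric matrix with Tr(Y²) = 1 whose diagonal entries are all zero. Then Tr(X²Y²) ≤ 1/2 and Tr((XY)²) ≥ −1/2. -/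
/-
Write `X = diagonal x` and `a i j = Y i j ^ 2`, so that `Tr(X²Y²) = ∑ x_i² a_ij` and
`Tr((XY)²) = ∑ x_i x_j a_ij`. Since `a` is symmetric, `2 ∑ x_i² a_ij = ∑ (x_i² + x_j²) a_ij`, and
since `a` vanishes on the diagonal only pairs `i ≠ j` contribute, for which
`x_i² + x_j² ≤ ∑ x_k² = 1`; hence `Tr(X²Y²) ≤ 1/2`. The lower bound follows from
`x_i x_j ≥ -(x_i² + x_j²)/2`, which gives `Tr((XY)²) ≥ -Tr(X²Y²)`.
-/

open Finset Matrix

section WeightedSums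

variable {n R : Type*} [Fintype n]

lemma sum_sum_mul_swap_of_symm [CommSemiring R] {a : n → n → R} (ha : ∀ i j, a j i = a i j)
    (w : n → R) : ∑ i, ∑ j, w j * a i j = ∑ i, ∑ j, w i * a i j := by
  rw [sum_comm]
  simp_rw [ha]

variable [CommRing R] [LinearOrder R] [IsStrictOrderedRing R]

lemma two_mul_sum_sum_mul_le [DecidableEq n] {w : n → R} {a : n → n → R} (hw : 0 ≤ w)
    (ha : 0 ≤ a) (ha_symm : ∀ i j, a j i = a i j) (ha_diag : ∀ i, a i i = 0) :
    2 * ∑ i, ∑ j, w i * a i j ≤ (∑ i, w i) * ∑ i, ∑ j, a i j := by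
  have hpair : ∀ i j, i ≠ j → w i + w j ≤ ∑ k, w k := fun i j hij => by
    rw [← sum_pair hij]
    exact sum_le_univ_sum_of_nonneg hw
  calc 2 * ∑ i, ∑ j, w i * a i j = ∑ i, ∑ j, (w i + w j) * a i j := by
        simp only [add_mul, sum_add_distrib, sum_sum_mul_swap_of_symm ha_symm]
        ring
    _ ≤ ∑ i, ∑ j, (∑ k, w k) * a i j := by
        refine sum_le_sum fun i _ => sum_le_sum fun j _ => ?_
        obtain rfl | hij := eq_or_ne i j
        · simp [ha_diag]
        · exact mul_le_mul_of_nonneg_right (hpair i j hij) (ha i j)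
    _ = (∑ i, w i) * ∑ i, ∑ j, a i j := by simp only [mul_sum]

lemma neg_sum_sum_sq_mul_le {a : n → n → R} (ha : 0 ≤ a) (ha_symm : ∀ i j, a j i = a i j)
    (x : n → R) :
    -∑ i, ∑ j, x i ^ 2 * a i j ≤ ∑ i, ∑ j, x i * x j * a i j := by
  have hsymm : 2 * ∑ i, ∑ j, x i ^ 2 * a i j = ∑ i, ∑ j, (x i ^ 2 + x j ^ 2) * a i j := by
    simp only [add_mul, sum_add_distrib, sum_sum_mul_swap_of_symm ha_symm (fun i => x i ^ 2)]
    ring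
  have hamgm : ∑ i, ∑ j, -((x i ^ 2 + x j ^ 2) * a i j) ≤ ∑ i, ∑ j, 2 * (x i * x j * a i j) :=
    sum_le_sum fun i _ => sum_le_sum fun j _ => by
      nlinarith [mul_nonneg (sq_nonneg (x i + x j)) (ha i j)]
  simp only [sum_neg_distrib, ← mul_sum] at hamgm
  linarith

end WeightedSums

namespace Matrix

variable {n R : Type*} [Fintype n] [CommRing R]

lemma trace_mul_self_of_isSymm {Y : Matrix n n R} (hY : Y.IsSymm) :
    (Y * Y).trace = ∑ i, ∑ j, Y i j ^ 2 := by
  simp [trace, mul_apply, hY.apply, sq]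

variable [DecidableEq n]

lemma trace_diagonal_mul_self_mul_mul_self {Y : Matrix n n R} (hY : Y.IsSymm) (x : n → R) :
    (diagonal x * diagonal x * (Y * Y)).trace = ∑ i, ∑ j, x i ^ 2 * Y i j ^ 2 := by
  simp only [diagonal_mul_diagonal, trace, diag_apply, diagonal_mul]
  simp only [mul_apply, mul_sum, hY.apply, sq]

lemma trace_diagonal_mul_mul_self {Y : Matrix n n R} (hY : Y.IsSymm) (x : n → R) :
    (diagonal x * Y * (diagonal x * Y)).trace = ∑ i, ∑ j, x i * x j * Y i j ^ 2 := by
  simp only [trace, diag_apply, mul_apply (M := diagonal x * Y), diagonal_mul]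
  refine sum_congr rfl fun i _ => sum_congr rfl fun j _ => ?_
  rw [hY.apply]
  ring

end Matrix

theorem stmt2_general {d : ℕ} (X Y : Matrix (Fin d) (Fin d) ℝ)
    (hXdiag : X.IsDiag) (hYsymm : Y.IsSymm) (hYdiag : ∀ i, Y i i = 0)
    (hX2 : (X * X).trace = 1) (hY2 : (Y * Y).trace = 1) :
    (X * X * (Y * Y)).trace ≤ 1/2 ∧ (-(1/2) : ℝ) ≤ ((X * Y) * (X * Y)).trace := by
  rw [← hXdiag.diagonal_diag] at hX2 ⊢
  rw [trace_diagonal_mul_self_mul_mul_self hYsymm, trace_diagonal_mul_mul_self hYsymm]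
  rw [trace_mul_self_of_isSymm hYsymm] at hY2
  have hx : ∑ i, X.diag i ^ 2 = 1 := by simpa [diagonal_mul_diagonal, sq] using hX2
  have hsq_symm : ∀ i j, Y j i ^ 2 = Y i j ^ 2 := fun i j => by rw [hYsymm.apply]
  have hbound := two_mul_sum_sum_mul_le (w := fun i => X.diag i ^ 2) (a := fun i j => Y i j ^ 2)
    (fun _ => sq_nonneg _) (fun _ _ => sq_nonneg _) hsq_symm (fun i => by simp [hYdiag])
  have hamgm := neg_sum_sum_sq_mul_le (a := fun i j => Y i j ^ 2) (fun _ _ => sq_nonneg _)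
    hsq_symm X.diag
  simp only [hx, hY2] at hbound
  constructor <;> linarith

/-- If `X` is diagonal with `Tr(X²) = 1` and `Y` is symmetric with zero diagonal and
`Tr(Y²) = 1`, then `Tr(X²Y²) ≤ 1/2` and `Tr((XY)²) ≥ -1/2`. -/
theorem stmt2 {d : ℕ} (hd : 1 ≤ d) (X Y : Matrix (Fin d) (Fin d) ℝ)
    (hXdiag : X.IsDiag) (hYsymm : Y.IsSymm) (hYdiag : ∀ i, Y i i = 0)
    (hX2 : (X * X).trace = 1) (hY2 : (Y * Y).trace = 1) :
    (X * X * (Y * Y)).trace ≤ 1/2 ∧ (-(1/2) : ℝ) ≤ ((X * Y) * (X * Y)).trace :=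
  stmt2_general X Y hXdiag hYsymm hYdiag hX2 hY2
end

section
/- Let V be a finite-dimensional real inner product space, f : V → ℝ twice continuously differentiable with ‖∇²f(s) − ∇²f(0)‖ ≤ ρ̂‖s‖ for all s in the ball of radius 3R about the origin. Let θ ∈ [0,1] and suppose s_{k−2}, s_{k−1}, s_k all have norm at most R. With u_j = (2−θ)s_j − (1−θ)s_{j−1} and δ_j = ∇f(u_j) − ∇f(0) − ∇²f(0)[u_j], it holds that ‖δ_k − δ_{k−1}‖ ≤ 6 ρ̂ R (‖s_k − s_{k−1}‖ + ‖s_{k−1} − s_{k−2}‖). -/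
/-! The map `δ(u) = ∇f(u) - ∇f(0) - ∇²f(0)[u]` has derivative `∇²f(u) - ∇²f(0)`, bounded by
`3ρ̂R` on the ball of radius `3R`, so by the mean value inequality `δ` is `3ρ̂R`-Lipschitz there.
Both `u_k` and `u_{k-1}` lie in that ball, and `u_k - u_{k-1}` is again an extrapolation
`(2-θ)(s_k - s_{k-1}) - (1-θ)(s_{k-1} - s_{k-2})`, of norm at most
`2(‖s_k - s_{k-1}‖ + ‖s_{k-1} - s_{k-2}‖)`. -/

theorem ContDiff.contDiff_gradient {F : Type*} [NormedAddCommGroup F] [InnerProductSpace ℝ F]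
    [CompleteSpace F] {f : F → ℝ} {m n : WithTop ℕ∞} (hf : ContDiff ℝ n f) (hmn : m + 1 ≤ n) :
    ContDiff ℝ m (gradient f) :=
  (InnerProductSpace.toDual ℝ F).symm.contDiff.comp (hf.fderiv_right hmn)

theorem norm_two_sub_smul_sub_one_sub_smul_le {E : Type*} [SeminormedAddCommGroup E]
    [NormedSpace ℝ E] {θ : ℝ} (hθ0 : 0 ≤ θ) (hθ1 : θ ≤ 1) (a b : E) :
    ‖(2 - θ) • a - (1 - θ) • b‖ ≤ 2 * ‖a‖ + ‖b‖ :=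
  calc ‖(2 - θ) • a - (1 - θ) • b‖ ≤ |2 - θ| * ‖a‖ + |1 - θ| * ‖b‖ := by
        simpa only [norm_smul, Real.norm_eq_abs] using norm_sub_le ((2 - θ) • a) ((1 - θ) • b)
    _ ≤ 2 * ‖a‖ + 1 * ‖b‖ := by
        gcongr
        · exact abs_le.2 ⟨by linarith, by linarith⟩
        · exact abs_le.2 ⟨by linarith, by linarith⟩
    _ = 2 * ‖a‖ + ‖b‖ := by rw [one_mul]

theorem stmt14_general {V : Type*} [NormedAddCommGroup V] [InnerProductSpace ℝ V]
    [FiniteDimensional ℝ V]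
    (f : V → ℝ) (hf : ContDiff ℝ 2 f) (ρ R : ℝ) (hρ : 0 < ρ)
    (hHess : ∀ s : V, ‖s‖ ≤ 3 * R →
      ‖fderiv ℝ (gradient f) s - fderiv ℝ (gradient f) 0‖ ≤ ρ * ‖s‖)
    (θ : ℝ) (hθ0 : 0 ≤ θ) (hθ1 : θ ≤ 1)
    (skmm skm sk : V) (hskmm : ‖skmm‖ ≤ R) (hskm : ‖skm‖ ≤ R) (hsk : ‖sk‖ ≤ R) :
    ‖(gradient f ((2 - θ) • sk - (1 - θ) • skm) - gradient f 0 -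
        fderiv ℝ (gradient f) 0 ((2 - θ) • sk - (1 - θ) • skm)) -
      (gradient f ((2 - θ) • skm - (1 - θ) • skmm) - gradient f 0 -
        fderiv ℝ (gradient f) 0 ((2 - θ) • skm - (1 - θ) • skmm))‖ ≤
      6 * ρ * R * (‖sk - skm‖ + ‖skm - skmm‖) := by
  set H₀ := fderiv ℝ (gradient f) 0
  set u := (2 - θ) • sk - (1 - θ) • skm
  set u' := (2 - θ) • skm - (1 - θ) • skmm
  have hdiff : Differentiable ℝ (gradient f) :=
    (hf.contDiff_gradient (m := 1) (by norm_num)).differentiable one_ne_zero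
  have hmem : ∀ a b : V, ‖a‖ ≤ R → ‖b‖ ≤ R →
      (2 - θ) • a - (1 - θ) • b ∈ Metric.closedBall (0 : V) (3 * R) := fun a b ha hb => by
    rw [mem_closedBall_zero_iff]
    linarith [norm_two_sub_smul_sub_one_sub_smul_le hθ0 hθ1 a b]
  have hbound : ∀ s ∈ Metric.closedBall (0 : V) (3 * R),
      ‖fderiv ℝ (gradient f) s - H₀‖ ≤ 3 * ρ * R := fun s hs => by
    rw [mem_closedBall_zero_iff] at hs
    nlinarith [hHess s hs]
  have hmvt : ‖gradient f u - gradient f u' - H₀ (u - u')‖ ≤ 3 * ρ * R * ‖u - u'‖ :=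
    (convex_closedBall _ _).norm_image_sub_le_of_norm_fderiv_le' (fun x _ => hdiff x) hbound
      (hmem skm skmm hskm hskmm) (hmem sk skm hsk hskm)
  have hstep : ‖u - u'‖ ≤ 2 * (‖sk - skm‖ + ‖skm - skmm‖) := by
    have hu : u - u' = (2 - θ) • (sk - skm) - (1 - θ) • (skm - skmm) := by
      simp only [u, u', smul_sub]; abel
    rw [hu]
    linarith [norm_two_sub_smul_sub_one_sub_smul_le hθ0 hθ1 (sk - skm) (skm - skmm),
      norm_nonneg (skm - skmm)]
  have hR : 0 ≤ R := (norm_nonneg sk).trans hsk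
  calc _ = ‖gradient f u - gradient f u' - H₀ (u - u')‖ := by rw [map_sub H₀ u u']; congr 1; abel
    _ ≤ 3 * ρ * R * (2 * (‖sk - skm‖ + ‖skm - skmm‖)) := hmvt.trans (by gcongr)
    _ = 6 * ρ * R * (‖sk - skm‖ + ‖skm - skmm‖) := by ring

/-- If the Hessian of `f` satisfies `‖∇²f(s) - ∇²f(0)‖ ≤ ρ̂‖s‖` on the ball of
radius `3R` and `‖s_{k-2}‖, ‖s_{k-1}‖, ‖s_k‖ ≤ R`, then with
`u_j = (2-θ)s_j - (1-θ)s_{j-1}` and `δ_j = ∇f(u_j) - ∇f(0) - ∇²f(0)[u_j]`, one has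
`‖δ_k - δ_{k-1}‖ ≤ 6 ρ̂ R (‖s_k - s_{k-1}‖ + ‖s_{k-1} - s_{k-2}‖)`. -/
theorem stmt14 {V : Type*} [NormedAddCommGroup V] [InnerProductSpace ℝ V]
    [FiniteDimensional ℝ V]
    (f : V → ℝ) (hf : ContDiff ℝ 2 f) (ρ R : ℝ) (hρ : 0 < ρ) (hR : 0 < R)
    (hHess : ∀ s : V, ‖s‖ ≤ 3 * R →
      ‖fderiv ℝ (gradient f) s - fderiv ℝ (gradient f) 0‖ ≤ ρ * ‖s‖)
    (θ : ℝ) (hθ0 : 0 ≤ θ) (hθ1 : θ ≤ 1)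
    (skmm skm sk : V) (hskmm : ‖skmm‖ ≤ R) (hskm : ‖skm‖ ≤ R) (hsk : ‖sk‖ ≤ R) :
    ‖(gradient f ((2 - θ) • sk - (1 - θ) • skm) - gradient f 0 -
        fderiv ℝ (gradient f) 0 ((2 - θ) • sk - (1 - θ) • skm)) -
      (gradient f ((2 - θ) • skm - (1 - θ) • skmm) - gradient f 0 -
        fderiv ℝ (gradient f) 0 ((2 - θ) • skm - (1 - θ) • skmm))‖ ≤
      6 * ρ * R * (‖sk - skm‖ + ‖skm - skmm‖) :=
  stmt14_general f hf ρ R hρ hHess θ hθ0 hθ1 skmm skm sk hskmm hskm hsk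
end

section
/- Let M be the unit sphere in ℝⁿ (n ≥ 2) with the induced Riemannian metric, let x ∈ M, s ∈ T_xM nonzero, and ṡ ∈ T_xM with orthogonal decomposition ṡ = ṡ_∥ + ṡ_⊥ where ṡ_∥ = (⟨ṡ,s⟩/⟨s,s⟩)s. The curve c(t) = Exp_x(s + t ṡ) has initial intrinsic acceleration c''(0) = ((‖s‖ − sin‖s‖ cos‖s‖)/‖s‖³) ‖ṡ_⊥‖² P_s(s) − 2((sin‖s‖ − ‖s‖cos‖s‖)/‖s‖³) ⟨s, ṡ⟩ ṡ_⊥, where P_s denotes parallel transport along the geodesic t ↦ Exp_x(ts) from 0 to 1. Consequently ‖c''(0)‖ ≤ (2/3)‖s‖ ‖ṡ‖ ‖ṡ_⊥‖. -/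
/-!
Write `c(t) = cos r(t) • x + (sin r(t) / r(t)) • (s + t • ṡ)` with `r(t) = ‖s + t • ṡ‖`.
Since `r'(0) = ⟪s, ṡ⟫ / ‖s‖` and `r''(0) = ‖ṡ_⊥‖² / ‖s‖`, the chain rule gives the ambient
acceleration `c''(0)` as a combination of `x`, `s` and `ṡ`; removing its normal component
`⟪c(0), c''(0)⟫ • c(0)` and using `sin² + cos² = 1` leaves the stated formula.
The result has the shape `(p ‖ṡ_⊥‖²) • P_s(s) - (2 q ⟪s, ṡ⟫) • ṡ_⊥` with `0 ≤ p ≤ 2/3` and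
`|q| ≤ 1/3`. As `P_s(s) ⊥ ṡ_⊥` and `‖P_s(s)‖ = ‖s‖`, Pythagoras gives
`‖c''(0)‖² ≤ (4/9) ‖ṡ_⊥‖² (‖ṡ_⊥‖² ‖s‖² + ⟪s, ṡ⟫²) = (4/9) ‖ṡ_⊥‖² ‖ṡ‖² ‖s‖²`.
-/
open Real Topology
open scoped RealInnerProductSpace

namespace Real

lemma hasDerivAt_sin_div_self {u : ℝ} (hu : u ≠ 0) :
    HasDerivAt (fun u => sin u / u) ((u * cos u - sin u) / u ^ 2) u :=
  ((hasDerivAt_sin u).div (hasDerivAt_id' u) hu).congr_deriv (by ring)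

lemma hasDerivAt_mul_cos_sub_sin_div_sq {u : ℝ} (hu : u ≠ 0) :
    HasDerivAt (fun u => (u * cos u - sin u) / u ^ 2)
      ((2 * sin u - 2 * u * cos u - u ^ 2 * sin u) / u ^ 3) u := by
  have h := (((hasDerivAt_id' u).mul (hasDerivAt_cos u)).sub (hasDerivAt_sin u)).div
    (hasDerivAt_pow 2 u) (pow_ne_zero 2 hu)
  refine h.congr_deriv ?_
  simp only [Pi.sub_apply, Pi.mul_apply]
  field_simp
  ring

lemma sub_sin_mul_cos_nonneg {ρ : ℝ} (hρ : 0 ≤ ρ) : 0 ≤ ρ - sin ρ * cos ρ := by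
  have h := sin_le (by positivity : (0 : ℝ) ≤ 2 * ρ)
  rw [sin_two_mul] at h
  linarith

lemma sub_sin_mul_cos_le {ρ : ℝ} (hρ : 0 ≤ ρ) : ρ - sin ρ * cos ρ ≤ 2 / 3 * ρ ^ 3 := by
  have h := sin_ge_sub_cube (by positivity : (0 : ℝ) ≤ 2 * ρ)
  rw [sin_two_mul] at h
  linarith

/-- `sin t - t cos t` has derivative `t sin t`, which is bounded by `t²`. -/
lemma abs_sin_sub_mul_cos_le {ρ : ℝ} (hρ : 0 ≤ ρ) : |sin ρ - ρ * cos ρ| ≤ ρ ^ 3 / 3 := by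
  have hf : ∀ t : ℝ, HasDerivAt (fun t => sin t - t * cos t) (t * sin t) t := fun t =>
    ((hasDerivAt_sin t).sub ((hasDerivAt_id' t).mul (hasDerivAt_cos t))).congr_deriv (by ring)
  have hB : ∀ t : ℝ, HasDerivAt (fun t : ℝ => t ^ 3 / 3) (t ^ 2) t := fun t =>
    ((hasDerivAt_pow 3 t).div_const 3).congr_deriv (by norm_num)
  refine image_norm_le_of_norm_deriv_right_le_deriv_boundary (a := 0) (b := ρ)
    (fun t _ => (hf t).continuousAt.continuousWithinAt) (fun t _ => (hf t).hasDerivWithinAt)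
    (by simp) hB (fun t _ => ?_) ⟨hρ, le_rfl⟩
  rw [norm_mul, Real.norm_eq_abs, Real.norm_eq_abs, sq, ← abs_mul_abs_self t]
  exact mul_le_mul_of_nonneg_left abs_sin_le_abs (abs_nonneg t)

end Real

lemma hasDerivAt_add_smul {F : Type*} [NormedAddCommGroup F] [NormedSpace ℝ F] (v w : F) (t : ℝ) :
    HasDerivAt (fun t : ℝ => v + t • w) w t := by
  simpa using ((hasDerivAt_id t).smul_const w).const_add v

lemma hasDerivAt_deriv_smul_add_smul_line {F : Type*} [NormedAddCommGroup F] [NormedSpace ℝ F]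
    {f f' g g' : ℝ → ℝ} {f'' g'' : ℝ} (x v w : F)
    (hf : ∀ᶠ t in 𝓝 0, HasDerivAt f (f' t) t) (hf' : HasDerivAt f' f'' 0)
    (hg : ∀ᶠ t in 𝓝 0, HasDerivAt g (g' t) t) (hg' : HasDerivAt g' g'' 0) :
    HasDerivAt (deriv fun t => f t • x + g t • (v + t • w))
      (f'' • x + g'' • v + (2 * g' 0) • w) 0 := by
  have hderiv : deriv (fun t => f t • x + g t • (v + t • w)) =ᶠ[𝓝 0]
      fun t => f' t • x + (g t • w + g' t • (v + t • w)) := by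
    filter_upwards [hf, hg] with t hft hgt
    exact ((hft.smul_const x).add (hgt.smul (hasDerivAt_add_smul v w t))).deriv
  have h := (hf'.smul_const x).add
    (((hg.self_of_nhds).smul_const w).add (hg'.smul (hasDerivAt_add_smul v w 0)))
  refine (h.congr_of_eventuallyEq hderiv).congr_deriv ?_
  simp only [zero_smul, add_zero]
  module

section InnerProductSpace

variable {E : Type*} [NormedAddCommGroup E] [InnerProductSpace ℝ E]

lemma HasDerivAt.norm {γ : ℝ → E} {γ' : E} {t : ℝ} (hγ : HasDerivAt γ γ' t) (h0 : γ t ≠ 0) :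
    HasDerivAt (fun t => ‖γ t‖) (⟪γ t, γ'⟫ / ‖γ t‖) t := by
  have hsq := hγ.norm_sq.sqrt (by positivity)
  simp only [sqrt_sq (norm_nonneg _)] at hsq
  exact hsq.congr_deriv (by ring)

lemma eventually_hasDerivAt_comp_norm_add_smul {F F' : ℝ → ℝ} {v : E} (w : E) (hv : v ≠ 0)
    (hF : ∀ u, 0 < u → HasDerivAt F (F' u) u) :
    ∀ᶠ t in 𝓝 0, HasDerivAt (fun t : ℝ => F ‖v + t • w‖)
      (F' ‖v + t • w‖ * (⟪v + t • w, w⟫ / ‖v + t • w‖)) t := by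
  have hne : ∀ᶠ t in 𝓝 (0 : ℝ), v + t • w ≠ 0 :=
    (hasDerivAt_add_smul v w 0).continuousAt.eventually_ne (by simpa using hv)
  filter_upwards [hne] with t ht
  exact (hF _ (norm_pos_iff.2 ht)).comp t ((hasDerivAt_add_smul v w t).norm ht)

lemma hasDerivAt_deriv_comp_norm_add_smul {F' : ℝ → ℝ} {F'' : ℝ} {v : E} (w : E) (hv : v ≠ 0)
    (hF' : HasDerivAt F' F'' ‖v‖) :
    HasDerivAt (fun t : ℝ => F' ‖v + t • w‖ * (⟪v + t • w, w⟫ / ‖v + t • w‖))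
      (F'' * (⟪v, w⟫ / ‖v‖) ^ 2 + F' ‖v‖ * ((‖w‖ ^ 2 - (⟪v, w⟫ / ‖v‖) ^ 2) / ‖v‖)) 0 := by
  have hγ := hasDerivAt_add_smul v w 0
  have hr := hγ.norm (by simpa using hv)
  have hA := hγ.inner ℝ (hasDerivAt_const 0 w)
  simp only [zero_smul, add_zero, inner_zero_right, zero_add] at hr hA
  have h := ((by simpa using hF' : HasDerivAt F' F'' ‖v + (0 : ℝ) • w‖).comp 0 hr).mul
    (hA.div hr (by simpa using hv))
  refine h.congr_deriv ?_
  simp only [Pi.div_apply, Function.comp_apply, zero_smul, add_zero, real_inner_self_eq_norm_sq]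
  field_simp

noncomputable def sphereExp (x v : E) : E := cos ‖v‖ • x + (sin ‖v‖ / ‖v‖) • v

/-- On the unit sphere, the intrinsic acceleration at `p` of a curve with ambient acceleration `u`
is the tangential part of `u`. -/
def tangentialPart (p u : E) : E := u - ⟪p, u⟫ • p

lemma norm_sub_inner_div_inner_smul_sq (v w : E) :
    ‖w - (⟪v, w⟫ / ⟪v, v⟫) • v‖ ^ 2 = ‖w‖ ^ 2 - (⟪v, w⟫ / ‖v‖) ^ 2 := by
  rcases eq_or_ne v 0 with rfl | hv
  · simp
  have hρ : ‖v‖ ≠ 0 := norm_ne_zero_iff.2 hv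
  rw [norm_sub_sq_real, norm_smul, real_inner_smul_right, real_inner_self_eq_norm_sq,
    real_inner_comm, Real.norm_eq_abs, mul_pow, sq_abs]
  field_simp
  ring

theorem tangentialPart_deriv_deriv_sphereExp_line {x v : E} (w : E) (hx : ‖x‖ = 1)
    (hxv : ⟪x, v⟫ = 0) (hxw : ⟪x, w⟫ = 0) (hv : v ≠ 0) :
    tangentialPart (sphereExp x v) (deriv (deriv fun t : ℝ => sphereExp x (v + t • w)) 0) =
      ((‖v‖ - sin ‖v‖ * cos ‖v‖) / ‖v‖ ^ 3 * ‖w - (⟪v, w⟫ / ⟪v, v⟫) • v‖ ^ 2) •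
          (cos ‖v‖ • v - (‖v‖ * sin ‖v‖) • x) -
        (2 * ((sin ‖v‖ - ‖v‖ * cos ‖v‖) / ‖v‖ ^ 3) * ⟪v, w⟫) • (w - (⟪v, w⟫ / ⟪v, v⟫) • v) := by
  have hρ : ‖v‖ ≠ 0 := norm_ne_zero_iff.2 hv
  have h := hasDerivAt_deriv_smul_add_smul_line x v w
    (eventually_hasDerivAt_comp_norm_add_smul w hv fun u _ => hasDerivAt_cos u)
    (hasDerivAt_deriv_comp_norm_add_smul w hv (hasDerivAt_sin ‖v‖).neg)
    (eventually_hasDerivAt_comp_norm_add_smul w hv fun u hu => hasDerivAt_sin_div_self hu.ne')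
    (hasDerivAt_deriv_comp_norm_add_smul w hv (hasDerivAt_mul_cos_sub_sin_div_sq hρ))
  simp only [tangentialPart, sphereExp]
  rw [h.deriv, norm_sub_inner_div_inner_smul_sq v w]
  simp only [zero_smul, add_zero, inner_add_left, inner_add_right, real_inner_smul_left,
    real_inner_smul_right, real_inner_self_eq_norm_sq, hx, hxv, hxw, real_inner_comm x v,
    Pi.neg_apply]
  have hpy := sin_sq_add_cos_sq ‖v‖
  match_scalars
  · field_simp
    linear_combination cos ‖v‖ * ⟪v, w⟫ ^ 2 * ‖v‖ ^ 3 * hpy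
  · field_simp
    linear_combination sin ‖v‖ * ‖v‖ * (⟪v, w⟫ ^ 2 * ‖v‖ ^ 2 + ‖v‖ ^ 2 * ‖w‖ ^ 2 - ⟪v, w⟫ ^ 2) * hpy
  · field_simp
    ring

lemma norm_tangentialPart_deriv_deriv_sphereExp_line_le {x v : E} (w : E) (hx : ‖x‖ = 1)
    (hxv : ⟪x, v⟫ = 0) (hxw : ⟪x, w⟫ = 0) :
    ‖((‖v‖ - sin ‖v‖ * cos ‖v‖) / ‖v‖ ^ 3 * ‖w - (⟪v, w⟫ / ⟪v, v⟫) • v‖ ^ 2) •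
          (cos ‖v‖ • v - (‖v‖ * sin ‖v‖) • x) -
        (2 * ((sin ‖v‖ - ‖v‖ * cos ‖v‖) / ‖v‖ ^ 3) * ⟪v, w⟫) • (w - (⟪v, w⟫ / ⟪v, v⟫) • v)‖ ≤
      2 / 3 * ‖v‖ * ‖w‖ * ‖w - (⟪v, w⟫ / ⟪v, v⟫) • v‖ := by
  rcases eq_or_ne v 0 with rfl | hv
  · simp
  have hρ : 0 < ‖v‖ := norm_pos_iff.2 hv
  set ρ := ‖v‖
  set P := cos ρ • v - (ρ * sin ρ) • x
  set q := w - (⟪v, w⟫ / ⟪v, v⟫) • v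
  set p := (ρ - sin ρ * cos ρ) / ρ ^ 3
  set r := (sin ρ - ρ * cos ρ) / ρ ^ 3
  have hvv : ⟪v, v⟫ = ρ ^ 2 := real_inner_self_eq_norm_sq v
  have hPq : ⟪P, q⟫ = 0 := by
    simp only [P, q, inner_sub_left, inner_sub_right, real_inner_smul_left, real_inner_smul_right,
      hvv, hxv, hxw]
    field_simp
    ring
  have hP : ‖P‖ ^ 2 = ρ ^ 2 := by
    have hvx : ⟪cos ρ • v, (ρ * sin ρ) • x⟫ = 0 := by
      simp only [real_inner_smul_left, real_inner_smul_right, real_inner_comm x v, hxv, mul_zero]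
    rw [sq, norm_sub_sq_eq_norm_sq_add_norm_sq_real hvx, norm_smul, norm_smul, hx]
    simp only [Real.norm_eq_abs, abs_mul, abs_of_pos hρ]
    linear_combination ρ ^ 2 * (sin_sq_add_cos_sq ρ + sq_abs (cos ρ) + sq_abs (sin ρ))
  have hw : ‖w‖ ^ 2 = ‖q‖ ^ 2 + (⟪v, w⟫ / ρ) ^ 2 := by
    rw [norm_sub_inner_div_inner_smul_sq v w]
    ring
  have hp : p ^ 2 ≤ (2 / 3) ^ 2 := by
    refine pow_le_pow_left₀ (div_nonneg (sub_sin_mul_cos_nonneg hρ.le) (by positivity)) ?_ 2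
    rw [div_le_iff₀ (by positivity)]
    exact sub_sin_mul_cos_le hρ.le
  have hr : r ^ 2 ≤ (1 / 3) ^ 2 := by
    rw [← sq_abs, abs_div, abs_of_pos (by positivity : 0 < ρ ^ 3)]
    refine pow_le_pow_left₀ (by positivity) ?_ 2
    rw [div_le_iff₀ (by positivity)]
    linarith [abs_sin_sub_mul_cos_le hρ.le]
  have hsq : ‖(p * ‖q‖ ^ 2) • P - (2 * r * ⟪v, w⟫) • q‖ ^ 2 ≤ (2 / 3 * ρ * ‖w‖ * ‖q‖) ^ 2 := by
    have horth : ⟪(p * ‖q‖ ^ 2) • P, (2 * r * ⟪v, w⟫) • q⟫ = 0 := by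
      rw [real_inner_smul_left, real_inner_smul_right, hPq, mul_zero, mul_zero]
    rw [sq, norm_sub_sq_eq_norm_sq_add_norm_sq_real horth, norm_smul, norm_smul]
    simp only [Real.norm_eq_abs]
    calc |p * ‖q‖ ^ 2| * ‖P‖ * (|p * ‖q‖ ^ 2| * ‖P‖) +
          |2 * r * ⟪v, w⟫| * ‖q‖ * (|2 * r * ⟪v, w⟫| * ‖q‖)
        = p ^ 2 * (‖q‖ ^ 4 * ρ ^ 2) + r ^ 2 * (4 * ⟪v, w⟫ ^ 2 * ‖q‖ ^ 2) := by
          simp only [← sq, mul_pow, sq_abs, hP]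
          ring
      _ ≤ (2 / 3) ^ 2 * (‖q‖ ^ 4 * ρ ^ 2) + (1 / 3) ^ 2 * (4 * ⟪v, w⟫ ^ 2 * ‖q‖ ^ 2) := by
          gcongr
      _ = (2 / 3) ^ 2 * ρ ^ 2 * ‖w‖ ^ 2 * ‖q‖ ^ 2 := by
          rw [hw]
          field_simp
          ring
      _ = (2 / 3 * ρ * ‖w‖ * ‖q‖) ^ 2 := by ring
  exact (pow_le_pow_iff_left₀ (norm_nonneg _) (by positivity) two_ne_zero).1 hsq

end InnerProductSpace

theorem stmt16_general {n : ℕ}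
    (x s sd : EuclideanSpace ℝ (Fin n))
    (hx : ‖x‖ = 1) (hxs : ⟪x, s⟫ = 0) (hs0 : s ≠ 0) (hxsd : ⟪x, sd⟫ = 0)
    (Exp : EuclideanSpace ℝ (Fin n) → EuclideanSpace ℝ (Fin n) →
      EuclideanSpace ℝ (Fin n))
    (hExp : ∀ p v, Exp p v = Real.cos ‖v‖ • p + (Real.sin ‖v‖ / ‖v‖) • v)
    (c : ℝ → EuclideanSpace ℝ (Fin n)) (hc : ∀ t, c t = Exp x (s + t • sd))
    (sperp : EuclideanSpace ℝ (Fin n))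
    (hsperp : sperp = sd - (⟪s, sd⟫ / ⟪s, s⟫) • s)
    (Ps : EuclideanSpace ℝ (Fin n))
    (hPs : Ps = Real.cos ‖s‖ • s - (‖s‖ * Real.sin ‖s‖) • x)
    (acc : EuclideanSpace ℝ (Fin n))
    (hacc : acc = deriv (deriv c) 0 - ⟪c 0, deriv (deriv c) 0⟫ • c 0) :
    acc = ((‖s‖ - Real.sin ‖s‖ * Real.cos ‖s‖) / ‖s‖ ^ 3 * ‖sperp‖ ^ 2) • Ps -
        (2 * ((Real.sin ‖s‖ - ‖s‖ * Real.cos ‖s‖) / ‖s‖ ^ 3) * ⟪s, sd⟫) • sperp ∧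
      ‖acc‖ ≤ 2/3 * ‖s‖ * ‖sd‖ * ‖sperp‖ := by
  have hc' : c = fun t => sphereExp x (s + t • sd) := funext fun t => (hc t).trans (hExp x _)
  have hacc' : acc = tangentialPart (sphereExp x s)
      (deriv (deriv fun t : ℝ => sphereExp x (s + t • sd)) 0) := by
    simp only [hacc, hc', tangentialPart, zero_smul, add_zero]
  subst hsperp hPs
  rw [hacc', tangentialPart_deriv_deriv_sphereExp_line sd hx hxs hxsd hs0]
  exact ⟨rfl, norm_tangentialPart_deriv_deriv_sphereExp_line_le sd hx hxs hxsd⟩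

/-- On the unit sphere `S^{n-1} ⊂ ℝⁿ` with `Exp_x(v) = cos(‖v‖)x + sin(‖v‖)v/‖v‖`,
for `x` on the sphere, a nonzero tangent vector `s` and a tangent vector `ṡ` with
orthogonal decomposition `ṡ = ṡ_∥ + ṡ_⊥`, the curve `c(t) = Exp_x(s + tṡ)` has
initial intrinsic acceleration (the tangential projection at `c(0)` of the ambient
second derivative)
`c''(0) = ((‖s‖ - sin‖s‖cos‖s‖)/‖s‖³)‖ṡ_⊥‖² P_s(s)
          - 2((sin‖s‖ - ‖s‖cos‖s‖)/‖s‖³)⟨s,ṡ⟩ ṡ_⊥`,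
where `P_s(s) = cos(‖s‖)s - ‖s‖sin(‖s‖)x` is the parallel transport of `s` along the
geodesic `t ↦ Exp_x(ts)`.  Consequently `‖c''(0)‖ ≤ (2/3)‖s‖‖ṡ‖‖ṡ_⊥‖`. -/
theorem stmt16 {n : ℕ} (hn : 2 ≤ n)
    (x s sd : EuclideanSpace ℝ (Fin n))
    (hx : ‖x‖ = 1) (hxs : ⟪x, s⟫ = 0) (hs0 : s ≠ 0) (hxsd : ⟪x, sd⟫ = 0)
    (Exp : EuclideanSpace ℝ (Fin n) → EuclideanSpace ℝ (Fin n) →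
      EuclideanSpace ℝ (Fin n))
    (hExp : ∀ p v, Exp p v = Real.cos ‖v‖ • p + (Real.sin ‖v‖ / ‖v‖) • v)
    (c : ℝ → EuclideanSpace ℝ (Fin n)) (hc : ∀ t, c t = Exp x (s + t • sd))
    (sperp : EuclideanSpace ℝ (Fin n))
    (hsperp : sperp = sd - (⟪s, sd⟫ / ⟪s, s⟫) • s)
    (Ps : EuclideanSpace ℝ (Fin n))
    (hPs : Ps = Real.cos ‖s‖ • s - (‖s‖ * Real.sin ‖s‖) • x)
    (acc : EuclideanSpace ℝ (Fin n))
    (hacc : acc = deriv (deriv c) 0 - ⟪c 0, deriv (deriv c) 0⟫ • c 0) :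
    acc = ((‖s‖ - Real.sin ‖s‖ * Real.cos ‖s‖) / ‖s‖ ^ 3 * ‖sperp‖ ^ 2) • Ps -
        (2 * ((Real.sin ‖s‖ - ‖s‖ * Real.cos ‖s‖) / ‖s‖ ^ 3) * ⟪s, sd⟫) • sperp ∧
      ‖acc‖ ≤ 2/3 * ‖s‖ * ‖sd‖ * ‖sperp‖ :=
  stmt16_general x s sd hx hxs hs0 hxsd Exp hExp c hc sperp hsperp Ps hPs acc hacc
end
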